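/- Let Ω(A) be an extending datum of a bialgebra A with ε_H multiplicative (ε_H(gh) = ε_H(g)ε_H(h)), and let ψ(h ⊗ a) = Σ (h₍₁₎ ▷ a₍₁₎) ⊗ (h₍₂₎ ◁ a₍₂₎) and σ(h ⊗ g) = Σ τ(h₍₁₎ ⊗ g₍₁₎) ⊗ h₍₂₎g₍₂₎. If the twisted condition (μ_A ⊗ H) ∘ (A ⊗ ψ) ∘ (σ ⊗ A) = (μ_A ⊗ H) ∘ (A ⊗ σ) ∘ (ψ ⊗ H) ∘ (H ⊗ ψ) holds, then (BE4) holds: Σ (g₍₁₎ ▷ (h₍₁₎ ▷ a₍₁₎)) τ((g₍₂₎ ◁ (h₍₂₎ ▷ a₍₂₎)) ⊗ (h₍₃₎ ◁ a₍₃₎)) = Σ τ(g₍₁₎ ⊗ h₍₁₎)((g₍₂₎ h₍₂₎) ▷ a). -/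

import Mathlib

open TensorProduct

variable {R A V H : Type*} [CommRing R] [Ring A] [Bialgebra R A]
  [AddCommGroup V] [Module R V] [AddCommGroup H] [Module R H] [Coalgebra R H]

/-- (μ_A ⊗ V) ∘ (A ⊗ ψ) ∘ (ψ ⊗ A) : (V ⊗ A) ⊗ A → A ⊗ V -/
noncomputable def psiMulLHS (ψ : V ⊗[R] A →ₗ[R] A ⊗[R] V) :
    (V ⊗[R] A) ⊗[R] A →ₗ[R] A ⊗[R] V :=
  TensorProduct.map (LinearMap.mul' R A) LinearMap.id
    ∘ₗ (TensorProduct.assoc R A A V).symm.toLinearMap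
    ∘ₗ LinearMap.lTensor A ψ
    ∘ₗ (TensorProduct.assoc R A V A).toLinearMap
    ∘ₗ LinearMap.rTensor A ψ

/-- ψ ∘ (V ⊗ μ_A) : (V ⊗ A) ⊗ A → A ⊗ V -/
noncomputable def psiMulRHS (ψ : V ⊗[R] A →ₗ[R] A ⊗[R] V) :
    (V ⊗[R] A) ⊗[R] A →ₗ[R] A ⊗[R] V :=
  ψ ∘ₗ LinearMap.lTensor V (LinearMap.mul' R A)
    ∘ₗ (TensorProduct.assoc R V A A).toLinearMap

/-- ∇ = (μ_A ⊗ V) ∘ (A ⊗ ψ) ∘ (A ⊗ V ⊗ η_A) : A ⊗ V → A ⊗ V -/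
noncomputable def nabla (ψ : V ⊗[R] A →ₗ[R] A ⊗[R] V) :
    A ⊗[R] V →ₗ[R] A ⊗[R] V :=
  TensorProduct.map (LinearMap.mul' R A) LinearMap.id
    ∘ₗ (TensorProduct.assoc R A A V).symm.toLinearMap
    ∘ₗ LinearMap.lTensor A ψ
    ∘ₗ LinearMap.lTensor A ((TensorProduct.mk R V A).flip 1)

/-- The comultiplication of the tensor product coalgebra H ⊗ A. -/
noncomputable def comulHA : H ⊗[R] A →ₗ[R] (H ⊗[R] A) ⊗[R] (H ⊗[R] A) :=
  (TensorProduct.tensorTensorTensorComm R H H A A).toLinearMap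
    ∘ₗ TensorProduct.map (Coalgebra.comul : H →ₗ[R] H ⊗[R] H)
        (Coalgebra.comul : A →ₗ[R] A ⊗[R] A)

/-- The comultiplication of the tensor product coalgebra H ⊗ H. -/
noncomputable def comulHH : H ⊗[R] H →ₗ[R] (H ⊗[R] H) ⊗[R] (H ⊗[R] H) :=
  (TensorProduct.tensorTensorTensorComm R H H H H).toLinearMap
    ∘ₗ TensorProduct.map (Coalgebra.comul : H →ₗ[R] H ⊗[R] H)
        (Coalgebra.comul : H →ₗ[R] H ⊗[R] H)

/-- The counit of the tensor product coalgebra H ⊗ A. -/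
noncomputable def counitHA : H ⊗[R] A →ₗ[R] R :=
  (TensorProduct.lid R R).toLinearMap
    ∘ₗ TensorProduct.map (Coalgebra.counit : H →ₗ[R] R)
        (Coalgebra.counit : A →ₗ[R] R)

/-- The counit of the tensor product coalgebra H ⊗ H. -/
noncomputable def counitHH : H ⊗[R] H →ₗ[R] R :=
  (TensorProduct.lid R R).toLinearMap
    ∘ₗ TensorProduct.map (Coalgebra.counit : H →ₗ[R] R)
        (Coalgebra.counit : H →ₗ[R] R)

/-- An extending datum Ω(A) = (H, ◁, ▷, τ) of the bialgebra A
(Agore–Militaru). -/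
structure ExtendingDatum (R A H : Type*) [CommRing R] [Ring A] [Bialgebra R A]
    [AddCommGroup H] [Module R H] [Coalgebra R H] where
  /-- the distinguished element 1_H -/
  one : H
  /-- the multiplication μ_H -/
  mul : H ⊗[R] H →ₗ[R] H
  /-- the action ◁ : H ⊗ A → H -/
  ract : H ⊗[R] A →ₗ[R] H
  /-- the action ▷ : H ⊗ A → A -/
  lact : H ⊗[R] A →ₗ[R] A
  /-- the cocycle τ : H ⊗ H → A -/
  tau : H ⊗[R] H →ₗ[R] A
  comul_one : (Coalgebra.comul : H →ₗ[R] H ⊗[R] H) one = one ⊗ₜ one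
  one_mul' : ∀ h : H, mul (one ⊗ₜ h) = h
  mul_one' : ∀ h : H, mul (h ⊗ₜ one) = h
  ract_comul : TensorProduct.map ract ract ∘ₗ comulHA =
    (Coalgebra.comul : H →ₗ[R] H ⊗[R] H) ∘ₗ ract
  ract_counit : (Coalgebra.counit : H →ₗ[R] R) ∘ₗ ract = counitHA
  lact_comul : TensorProduct.map lact lact ∘ₗ comulHA =
    (Coalgebra.comul : A →ₗ[R] A ⊗[R] A) ∘ₗ lact
  lact_counit : (Coalgebra.counit : A →ₗ[R] R) ∘ₗ lact = counitHA
  tau_comul : TensorProduct.map tau tau ∘ₗ comulHH =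
    (Coalgebra.comul : A →ₗ[R] A ⊗[R] A) ∘ₗ tau
  tau_counit : (Coalgebra.counit : A →ₗ[R] R) ∘ₗ tau = counitHH
  lact_one : ∀ h : H, lact (h ⊗ₜ (1 : A)) =
    algebraMap R A ((Coalgebra.counit : H →ₗ[R] R) h)
  one_lact : ∀ a : A, lact (one ⊗ₜ a) = a
  one_ract : ∀ a : A, ract (one ⊗ₜ a) = ((Coalgebra.counit : A →ₗ[R] R) a) • one
  ract_one : ∀ h : H, ract (h ⊗ₜ (1 : A)) = h
  tau_one : ∀ h : H, tau (h ⊗ₜ one) =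
    algebraMap R A ((Coalgebra.counit : H →ₗ[R] R) h)
  one_tau : ∀ h : H, tau (one ⊗ₜ h) =
    algebraMap R A ((Coalgebra.counit : H →ₗ[R] R) h)

namespace ExtendingDatum

variable (E : ExtendingDatum R A H)

/-- ψ(h ⊗ a) = Σ (h₍₁₎ ▷ a₍₁₎) ⊗ (h₍₂₎ ◁ a₍₂₎). -/
noncomputable def psiE : H ⊗[R] A →ₗ[R] A ⊗[R] H :=
  TensorProduct.map E.lact E.ract ∘ₗ comulHA

/-- σ(h ⊗ g) = Σ τ(h₍₁₎ ⊗ g₍₁₎) ⊗ h₍₂₎g₍₂₎. -/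
noncomputable def sigmaE : H ⊗[R] H →ₗ[R] A ⊗[R] H :=
  TensorProduct.map E.tau E.mul ∘ₗ comulHH

/-- (BE1): (g·h)·l = Σ (g ◁ τ(h₍₁₎ ⊗ l₍₁₎))·(h₍₂₎·l₍₂₎). -/
def BE1 : Prop :=
  E.mul ∘ₗ LinearMap.rTensor H E.mul =
    E.mul ∘ₗ LinearMap.rTensor H E.ract
      ∘ₗ (TensorProduct.assoc R H A H).symm.toLinearMap
      ∘ₗ LinearMap.lTensor H E.sigmaE
      ∘ₗ (TensorProduct.assoc R H H H).toLinearMap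

/-- (BE2): g ▷ (ab) = Σ (g₍₁₎ ▷ a₍₁₎)((g₍₂₎ ◁ a₍₂₎) ▷ b). -/
def BE2 : Prop :=
  E.lact ∘ₗ LinearMap.lTensor H (LinearMap.mul' R A) =
    LinearMap.mul' R A ∘ₗ LinearMap.lTensor A E.lact
      ∘ₗ (TensorProduct.assoc R A H A).toLinearMap
      ∘ₗ LinearMap.rTensor A E.psiE
      ∘ₗ (TensorProduct.assoc R H A A).symm.toLinearMap

/-- (BE3): (g·h) ◁ a = Σ (g ◁ (h₍₁₎ ▷ a₍₁₎))·(h₍₂₎ ◁ a₍₂₎). -/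
def BE3 : Prop :=
  E.ract ∘ₗ LinearMap.rTensor A E.mul =
    E.mul ∘ₗ LinearMap.rTensor H E.ract
      ∘ₗ (TensorProduct.assoc R H A H).symm.toLinearMap
      ∘ₗ LinearMap.lTensor H E.psiE
      ∘ₗ (TensorProduct.assoc R H H A).toLinearMap

/-- (BE4): μ_A ∘ (A ⊗ τ) ∘ (ψ ⊗ H) ∘ (H ⊗ ψ) = μ_A ∘ (A ⊗ ▷) ∘ (σ ⊗ A). -/
def BE4 : Prop :=
  LinearMap.mul' R A ∘ₗ LinearMap.lTensor A E.tau
      ∘ₗ (TensorProduct.assoc R A H H).toLinearMap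
      ∘ₗ LinearMap.rTensor H E.psiE
      ∘ₗ (TensorProduct.assoc R H A H).symm.toLinearMap
      ∘ₗ LinearMap.lTensor H E.psiE
      ∘ₗ (TensorProduct.assoc R H H A).toLinearMap =
    LinearMap.mul' R A ∘ₗ LinearMap.lTensor A E.lact
      ∘ₗ (TensorProduct.assoc R A H A).toLinearMap
      ∘ₗ LinearMap.rTensor A E.sigmaE

/-- (BE5): μ_A ∘ (A ⊗ τ) ∘ (ψ ⊗ H) ∘ (H ⊗ σ) = μ_A ∘ (A ⊗ τ) ∘ (σ ⊗ H). -/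
def BE5 : Prop :=
  LinearMap.mul' R A ∘ₗ LinearMap.lTensor A E.tau
      ∘ₗ (TensorProduct.assoc R A H H).toLinearMap
      ∘ₗ LinearMap.rTensor H E.psiE
      ∘ₗ (TensorProduct.assoc R H A H).symm.toLinearMap
      ∘ₗ LinearMap.lTensor H E.sigmaE
      ∘ₗ (TensorProduct.assoc R H H H).toLinearMap =
    LinearMap.mul' R A ∘ₗ LinearMap.lTensor A E.tau
      ∘ₗ (TensorProduct.assoc R A H H).toLinearMap
      ∘ₗ LinearMap.rTensor H E.sigmaE

/-- (BE6): c_{A,H} ∘ ψ = (◁ ⊗ ▷) ∘ δ_{H⊗A}. -/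
def BE6 : Prop :=
  (TensorProduct.comm R A H).toLinearMap ∘ₗ E.psiE =
    TensorProduct.map E.ract E.lact ∘ₗ comulHA

/-- (BE7): c_{A,H} ∘ σ = (μ_H ⊗ τ) ∘ δ_{H⊗H}. -/
def BE7 : Prop :=
  (TensorProduct.comm R A H).toLinearMap ∘ₗ E.sigmaE =
    TensorProduct.map E.mul E.tau ∘ₗ comulHH

/-- δ_H is multiplicative: δ_H(gh) = Σ g₍₁₎h₍₁₎ ⊗ g₍₂₎h₍₂₎. -/
def ComulMultiplicative : Prop :=
  (Coalgebra.comul : H →ₗ[R] H ⊗[R] H) ∘ₗ E.mul =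
    TensorProduct.map E.mul E.mul ∘ₗ comulHH

/-- ε_H is multiplicative: ε_H(gh) = ε_H(g)ε_H(h). -/
def CounitMultiplicative : Prop :=
  (Coalgebra.counit : H →ₗ[R] R) ∘ₗ E.mul = counitHH

/-- (H, ◁) is a right A-module. -/
def IsRightModule : Prop :=
  (∀ h : H, E.ract (h ⊗ₜ (1 : A)) = h) ∧
    E.ract ∘ₗ LinearMap.rTensor A E.ract =
      E.ract ∘ₗ LinearMap.lTensor H (LinearMap.mul' R A)
        ∘ₗ (TensorProduct.assoc R H A A).toLinearMap

end ExtendingDatum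

/-- Twisted condition LHS: (μ_A ⊗ V) ∘ (A ⊗ ψ) ∘ (σ ⊗ A) : (V ⊗ V) ⊗ A → A ⊗ V. -/
noncomputable def twistedLHS (ψ : V ⊗[R] A →ₗ[R] A ⊗[R] V)
    (σ : V ⊗[R] V →ₗ[R] A ⊗[R] V) : (V ⊗[R] V) ⊗[R] A →ₗ[R] A ⊗[R] V :=
  TensorProduct.map (LinearMap.mul' R A) LinearMap.id
    ∘ₗ (TensorProduct.assoc R A A V).symm.toLinearMap
    ∘ₗ LinearMap.lTensor A ψ
    ∘ₗ (TensorProduct.assoc R A V A).toLinearMap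
    ∘ₗ LinearMap.rTensor A σ

/-- Twisted condition RHS: (μ_A ⊗ V) ∘ (A ⊗ σ) ∘ (ψ ⊗ V) ∘ (V ⊗ ψ) : V ⊗ (V ⊗ A) → A ⊗ V. -/
noncomputable def twistedRHS (ψ : V ⊗[R] A →ₗ[R] A ⊗[R] V)
    (σ : V ⊗[R] V →ₗ[R] A ⊗[R] V) : V ⊗[R] (V ⊗[R] A) →ₗ[R] A ⊗[R] V :=
  TensorProduct.map (LinearMap.mul' R A) LinearMap.id
    ∘ₗ (TensorProduct.assoc R A A V).symm.toLinearMap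
    ∘ₗ LinearMap.lTensor A σ
    ∘ₗ (TensorProduct.assoc R A V V).toLinearMap
    ∘ₗ LinearMap.rTensor V ψ
    ∘ₗ (TensorProduct.assoc R V A V).symm.toLinearMap
    ∘ₗ LinearMap.lTensor V ψ

/-- Cocycle condition LHS: (μ_A ⊗ V) ∘ (A ⊗ σ) ∘ (σ ⊗ V) : (V ⊗ V) ⊗ V → A ⊗ V. -/
noncomputable def cocycleLHS (σ : V ⊗[R] V →ₗ[R] A ⊗[R] V) :
    (V ⊗[R] V) ⊗[R] V →ₗ[R] A ⊗[R] V :=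
  TensorProduct.map (LinearMap.mul' R A) LinearMap.id
    ∘ₗ (TensorProduct.assoc R A A V).symm.toLinearMap
    ∘ₗ LinearMap.lTensor A σ
    ∘ₗ (TensorProduct.assoc R A V V).toLinearMap
    ∘ₗ LinearMap.rTensor V σ

/-- Cocycle condition RHS: (μ_A ⊗ V) ∘ (A ⊗ σ) ∘ (ψ ⊗ V) ∘ (V ⊗ σ) : V ⊗ (V ⊗ V) → A ⊗ V. -/
noncomputable def cocycleRHS (ψ : V ⊗[R] A →ₗ[R] A ⊗[R] V)
    (σ : V ⊗[R] V →ₗ[R] A ⊗[R] V) : V ⊗[R] (V ⊗[R] V) →ₗ[R] A ⊗[R] V :=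
  TensorProduct.map (LinearMap.mul' R A) LinearMap.id
    ∘ₗ (TensorProduct.assoc R A A V).symm.toLinearMap
    ∘ₗ LinearMap.lTensor A σ
    ∘ₗ (TensorProduct.assoc R A V V).toLinearMap
    ∘ₗ LinearMap.rTensor V ψ
    ∘ₗ (TensorProduct.assoc R V A V).symm.toLinearMap
    ∘ₗ LinearMap.lTensor V σ

/-- Auxiliary map V ⊗ (A ⊗ V) → A ⊗ V used in the weak crossed product. -/
noncomputable def wcpAux (ψ : V ⊗[R] A →ₗ[R] A ⊗[R] V)
    (σ : V ⊗[R] V →ₗ[R] A ⊗[R] V) : V ⊗[R] (A ⊗[R] V) →ₗ[R] A ⊗[R] V :=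
  TensorProduct.map (LinearMap.mul' R A) LinearMap.id
    ∘ₗ (TensorProduct.assoc R A A V).symm.toLinearMap
    ∘ₗ LinearMap.lTensor A σ
    ∘ₗ (TensorProduct.assoc R A V V).toLinearMap
    ∘ₗ LinearMap.rTensor V ψ
    ∘ₗ (TensorProduct.assoc R V A V).symm.toLinearMap

/-- The weak crossed product multiplication
μ_{A⊗V} = (μ_A ⊗ V) ∘ (μ_A ⊗ σ) ∘ (A ⊗ ψ ⊗ V) on A ⊗ V. -/
noncomputable def wcpMul (ψ : V ⊗[R] A →ₗ[R] A ⊗[R] V)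
    (σ : V ⊗[R] V →ₗ[R] A ⊗[R] V) :
    (A ⊗[R] V) ⊗[R] (A ⊗[R] V) →ₗ[R] A ⊗[R] V :=
  TensorProduct.map (LinearMap.mul' R A) LinearMap.id
    ∘ₗ (TensorProduct.assoc R A A V).symm.toLinearMap
    ∘ₗ LinearMap.lTensor A (wcpAux ψ σ)
    ∘ₗ (TensorProduct.assoc R A V (A ⊗[R] V)).toLinearMap

/-!
Apply `A ⊗ ε_H` to both sides of the twisted condition. This map commutes past `μ_A ⊗ H`, so
it only hits the inner `ψ` on one side and the inner `σ` on the other. Since `ε_H ∘ ◁` and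
`ε_H ∘ μ_H` are the counits of the coalgebras `H ⊗ A` and `H ⊗ H`, the counit axiom turns
`(A ⊗ ε_H) ∘ ψ` into `▷` and `(A ⊗ ε_H) ∘ σ` into `τ`, and the two sides become those of (BE4).
-/

section ApplyRight

variable {R M N : Type*} [CommRing R] [AddCommGroup M] [Module R M]
  [AddCommGroup N] [Module R N]

/-- For `φ = ε_H` this is the paper's `A ⊗ ε_H`. -/
noncomputable def applyRight (φ : N →ₗ[R] R) : M ⊗[R] N →ₗ[R] M :=
  (TensorProduct.rid R M).toLinearMap ∘ₗ φ.lTensor M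

@[simp]
lemma applyRight_tmul (φ : N →ₗ[R] R) (m : M) (n : N) :
    applyRight φ (m ⊗ₜ n) = φ n • m := by
  simp [applyRight]

lemma applyRight_comp_map_comul {C : Type*} [AddCommGroup C] [Module R C] [Coalgebra R C]
    (φ : N →ₗ[R] R) (f : C →ₗ[R] M) (g : C →ₗ[R] N) (hg : φ ∘ₗ g = Coalgebra.counit) :
    applyRight φ ∘ₗ TensorProduct.map f g ∘ₗ Coalgebra.comul = f := by
  have hfactor : applyRight φ ∘ₗ TensorProduct.map f g =
      f ∘ₗ (TensorProduct.rid R C).toLinearMap ∘ₗ (Coalgebra.counit : C →ₗ[R] R).lTensor C := by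
    ext c d
    simp [← hg]
  ext c
  rw [← LinearMap.comp_assoc, hfactor]
  simp [Coalgebra.lTensor_counit_comul]

lemma applyRight_mul_lTensor {A W : Type*} [Ring A] [Algebra R A] [AddCommGroup W] [Module R W]
    (φ : N →ₗ[R] R) (f : W →ₗ[R] A ⊗[R] N) (x : A ⊗[R] W) :
    applyRight φ (TensorProduct.map (LinearMap.mul' R A) LinearMap.id
      ((TensorProduct.assoc R A A N).symm (f.lTensor A x))) =
      LinearMap.mul' R A ((applyRight φ ∘ₗ f).lTensor A x) := by
  induction x using TensorProduct.induction_on with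
  | zero => simp
  | add x y hx hy => simp only [map_add, hx, hy]
  | tmul a w =>
    simp only [LinearMap.lTensor_tmul, LinearMap.comp_apply]
    induction f w using TensorProduct.induction_on with
    | zero => simp
    | add x y hx hy => simp only [TensorProduct.tmul_add, map_add, hx, hy]
    | tmul b n => simp

end ApplyRight

section Twisted

variable (φ : V →ₗ[R] R) (ψ : V ⊗[R] A →ₗ[R] A ⊗[R] V) (σ : V ⊗[R] V →ₗ[R] A ⊗[R] V)

lemma applyRight_comp_twistedLHS :
    applyRight φ ∘ₗ twistedLHS ψ σ =
      LinearMap.mul' R A ∘ₗ (applyRight φ ∘ₗ ψ).lTensor A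
        ∘ₗ (TensorProduct.assoc R A V A).toLinearMap ∘ₗ σ.rTensor A := by
  ext x
  exact applyRight_mul_lTensor φ ψ _

lemma applyRight_comp_twistedRHS :
    applyRight φ ∘ₗ twistedRHS ψ σ =
      LinearMap.mul' R A ∘ₗ (applyRight φ ∘ₗ σ).lTensor A
        ∘ₗ (TensorProduct.assoc R A V V).toLinearMap ∘ₗ ψ.rTensor V
        ∘ₗ (TensorProduct.assoc R V A V).symm.toLinearMap ∘ₗ ψ.lTensor V := by
  ext x
  exact applyRight_mul_lTensor φ σ _

end Twisted

namespace ExtendingDatum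

variable (E : ExtendingDatum R A H)

lemma counitHA_eq_counit : (counitHA : H ⊗[R] A →ₗ[R] R) = Coalgebra.counit := by
  ext h a
  simp [counitHA, TensorProduct.counit_tmul, mul_comm]

lemma counitHH_eq_counit : (counitHH : H ⊗[R] H →ₗ[R] R) = Coalgebra.counit := by
  ext g h
  simp [counitHH, TensorProduct.counit_tmul, mul_comm]

lemma applyRight_counit_comp_psiE : applyRight Coalgebra.counit ∘ₗ E.psiE = E.lact :=
  applyRight_comp_map_comul _ _ _ (E.ract_counit.trans counitHA_eq_counit)

lemma applyRight_counit_comp_sigmaE (hε : E.CounitMultiplicative) :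
    applyRight Coalgebra.counit ∘ₗ E.sigmaE = E.tau :=
  applyRight_comp_map_comul _ _ _ (hε.trans counitHH_eq_counit)

end ExtendingDatum

/-- If ε_H is multiplicative and the weak crossed product twisted condition
holds for ψ and σ of an extending datum, then (BE4) holds. -/
theorem twisted_implies_BE4 (E : ExtendingDatum R A H)
    (hε : E.CounitMultiplicative)
    (htw : twistedLHS E.psiE E.sigmaE =
      twistedRHS E.psiE E.sigmaE ∘ₗ (TensorProduct.assoc R H H A).toLinearMap) :
    E.BE4 := by
  calc _ = (applyRight Coalgebra.counit ∘ₗ twistedRHS E.psiE E.sigmaE)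
        ∘ₗ (TensorProduct.assoc R H H A).toLinearMap := by
        rw [applyRight_comp_twistedRHS, E.applyRight_counit_comp_sigmaE hε]
        simp only [LinearMap.comp_assoc]
    _ = applyRight Coalgebra.counit ∘ₗ twistedLHS E.psiE E.sigmaE := by
        rw [LinearMap.comp_assoc, htw]
    _ = _ := by rw [applyRight_comp_twistedLHS, E.applyRight_counit_comp_psiE]
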